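/- Restricting the autocrat's actions raises the minimum fixed point: suppose X'_s ⊆ X_s is nonempty for every s ∈ S, m : S → ℝ is a fixed point of the min–max operator built from the action sets X_s, and m' : S → ℝ is a fixed point of the min–max operator built from the restricted sets X'_s (with the same Y, T, U, λ). Then m(s) ≤ m'(s) for all s ∈ S. -/
import Mathlib


/-- The Bellman min–max operator built from a family `Z` of autocrat action sets:
`s ↦ min_{x ∈ Z s} max_{y ∈ Y s} (λ·m(T(x,y;s)) + (1−λ)·U(x,y;s))`. -/
noncomputable def bellmanMinMaxOn {S : Type*} (X Y : S → Type*)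
    [∀ s, Fintype (X s)] [∀ s, Fintype (Y s)] [∀ s, Nonempty (Y s)]
    (T : ∀ s, X s → Y s → S) (U : ∀ s, X s → Y s → ℝ) (lam : ℝ)
    (Z : ∀ s, Finset (X s)) (hZ : ∀ s, (Z s).Nonempty)
    (m : S → ℝ) (s : S) : ℝ :=
  (Z s).inf' (hZ s) fun x =>
    Finset.univ.sup' Finset.univ_nonempty fun y : Y s =>
      lam * m (T s x y) + (1 - lam) * U s x y

/-- The Bellman max–min operator built from a family `Z` of autocrat action sets:
`s ↦ max_{x ∈ Z s} min_{y ∈ Y s} (λ·M(T(x,y;s)) + (1−λ)·U(x,y;s))`. -/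
noncomputable def bellmanMaxMinOn {S : Type*} (X Y : S → Type*)
    [∀ s, Fintype (X s)] [∀ s, Fintype (Y s)] [∀ s, Nonempty (Y s)]
    (T : ∀ s, X s → Y s → S) (U : ∀ s, X s → Y s → ℝ) (lam : ℝ)
    (Z : ∀ s, Finset (X s)) (hZ : ∀ s, (Z s).Nonempty)
    (M : S → ℝ) (s : S) : ℝ :=
  (Z s).sup' (hZ s) fun x =>
    Finset.univ.inf' Finset.univ_nonempty fun y : Y s =>
      lam * M (T s x y) + (1 - lam) * U s x y

/-- Restricting the autocrat's actions raises the minimum fixed point: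
if `m` is a fixed point of the min–max operator built from the full action sets `X s`
and `m'` is a fixed point of the min–max operator built from nonempty subsets `X' s`,
then `m ≤ m'` pointwise. -/
theorem restriction_raises_min_fixed_point
    {S : Type*} [Fintype S] [Nonempty S]
    (X Y : S → Type*)
    [∀ s, Fintype (X s)] [∀ s, Nonempty (X s)]
    [∀ s, Fintype (Y s)] [∀ s, Nonempty (Y s)]
    (T : ∀ s, X s → Y s → S) (U : ∀ s, X s → Y s → ℝ)
    (lam : ℝ) (hlam : lam ∈ Set.Ioo (0 : ℝ) 1)
    (X' : ∀ s, Finset (X s)) (hX' : ∀ s, (X' s).Nonempty)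
    (m m' : S → ℝ)
    (hm : ∀ s, m s = bellmanMinMaxOn X Y T U lam
      (fun s => (Finset.univ : Finset (X s))) (fun _ => Finset.univ_nonempty) m s)
    (hm' : ∀ s, m' s = bellmanMinMaxOn X Y T U lam X' hX' m' s) :
    ∀ s, m s ≤ m' s := by
  set d : ℝ := Finset.univ.sup' Finset.univ_nonempty (fun s => m s - m' s) with hd
  have hle : ∀ s : S, m s - m' s ≤ d := fun s => by
    rw [hd]; exact Finset.le_sup' (fun s => m s - m' s) (Finset.mem_univ s)
  obtain ⟨s₀, _, hs₀⟩ := Finset.exists_mem_eq_sup' (Finset.univ_nonempty (α := S))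
    (fun s => m s - m' s)
  -- choose the minimizing x' for m' at s₀
  obtain ⟨x₀, hx₀mem, hx₀⟩ := Finset.exists_mem_eq_inf' (hX' s₀)
    (fun x => Finset.univ.sup' Finset.univ_nonempty fun y : Y s₀ =>
      lam * m' (T s₀ x y) + (1 - lam) * U s₀ x y)
  -- choose the maximizing y for m at s₀, x₀
  obtain ⟨y₀, _, hy₀⟩ := Finset.exists_mem_eq_sup' (Finset.univ_nonempty (α := Y s₀))
    (fun y : Y s₀ => lam * m (T s₀ x₀ y) + (1 - lam) * U s₀ x₀ y)
  have hm_le : m s₀ ≤ lam * m (T s₀ x₀ y₀) + (1 - lam) * U s₀ x₀ y₀ := by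
    rw [hm s₀, bellmanMinMaxOn, ← hy₀]
    exact Finset.inf'_le _ (Finset.mem_univ x₀)
  have hm'_ge : lam * m' (T s₀ x₀ y₀) + (1 - lam) * U s₀ x₀ y₀ ≤ m' s₀ := by
    rw [hm' s₀, bellmanMinMaxOn, hx₀]
    exact Finset.le_sup' (fun y : Y s₀ => lam * m' (T s₀ x₀ y) + (1 - lam) * U s₀ x₀ y)
      (Finset.mem_univ y₀)
  have key : d ≤ lam * d := by
    calc d = m s₀ - m' s₀ := by rw [hd, hs₀]
    _ ≤ lam * m (T s₀ x₀ y₀) - lam * m' (T s₀ x₀ y₀) := by linarith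
    _ = lam * (m (T s₀ x₀ y₀) - m' (T s₀ x₀ y₀)) := by ring
    _ ≤ lam * d := by
        have := hle (T s₀ x₀ y₀)
        nlinarith [hlam.1]
  have hd0 : d ≤ 0 := by nlinarith [hlam.1, hlam.2]
  intro s
  have := hle s
  linarith
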